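/- In a finite geometry with at least two lines, the number of points is at most the number of lines: v ≤ b (theorem of de Bruijn and Erdős). -/

import Mathlib

/-!
Viewed as an incidence structure, a finite linear space with at least two lines is a
nondegenerate configuration in which any two points are joined by a line. For such
configurations Hall's marriage theorem yields `|P| ≤ |L|` (`Configuration.HasLines.card_le`).
-/

/-- A finite geometry (finite linear space): any two distinct points lie on exactly one
common line, and every line contains at least two points. -/
def IsGeometry {P : Type*} (lines : Finset (Finset P)) : Prop :=
  (∀ p q : P, p ≠ q → ∃! ℓ, ℓ ∈ lines ∧ p ∈ ℓ ∧ q ∈ ℓ) ∧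
  (∀ ℓ ∈ lines, 2 ≤ ℓ.card)

namespace IsGeometry

variable {P : Type*} {lines : Finset (Finset P)}

instance : Membership P lines := ⟨fun ℓ p => p ∈ (ℓ : Finset P)⟩

theorem existsUnique_line (hG : IsGeometry lines) {p q : P} (hpq : p ≠ q) :
    ∃! ℓ : lines, p ∈ ℓ ∧ q ∈ ℓ := by
  obtain ⟨ℓ, ⟨hℓ, hp, hq⟩, huniq⟩ := hG.1 p q hpq
  exact ⟨⟨ℓ, hℓ⟩, ⟨hp, hq⟩, fun m hm => Subtype.ext (huniq m ⟨m.2, hm⟩)⟩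

theorem eq_or_eq (hG : IsGeometry lines) {p₁ p₂ : P} {ℓ₁ ℓ₂ : lines}
    (h₁ : p₁ ∈ ℓ₁) (h₂ : p₂ ∈ ℓ₁) (h₃ : p₁ ∈ ℓ₂) (h₄ : p₂ ∈ ℓ₂) : p₁ = p₂ ∨ ℓ₁ = ℓ₂ :=
  or_iff_not_imp_left.2 fun hp => (hG.existsUnique_line hp).unique ⟨h₁, h₂⟩ ⟨h₃, h₄⟩

theorem exists_mem_ne (hG : IsGeometry lines) (ℓ : lines) (p : P) : ∃ q ∈ ℓ, q ≠ p :=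
  Finset.exists_mem_ne (hG.2 ℓ ℓ.2) p

theorem exists_notMem (hG : IsGeometry lines) (hlines : 2 ≤ lines.card) (ℓ : lines) :
    ∃ p, p ∉ ℓ := by
  obtain ⟨ℓ', hℓ', hne⟩ := Finset.exists_mem_ne hlines ℓ
  obtain ⟨p, hp, q, hq, hpq⟩ := Finset.one_lt_card.1 (hG.2 ℓ' hℓ')
  by_contra! h
  rcases hG.eq_or_eq (ℓ₁ := ⟨ℓ', hℓ'⟩) hp hq (h p) (h q) with h' | h'
  exacts [hpq h', hne (congrArg Subtype.val h')]

theorem exists_line_notMem (hG : IsGeometry lines) (hlines : 2 ≤ lines.card) (p : P) :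
    ∃ ℓ : lines, p ∉ ℓ := by
  obtain ⟨ℓ, hℓ⟩ := Finset.card_pos.1 (by omega : 0 < lines.card)
  by_cases hpℓ : p ∈ (⟨ℓ, hℓ⟩ : lines)
  swap
  · exact ⟨_, hpℓ⟩
  -- the line joining a point `q` off `ℓ` to a point `r ≠ p` of `ℓ` misses `p`
  obtain ⟨q, hq⟩ := hG.exists_notMem hlines ⟨ℓ, hℓ⟩
  obtain ⟨r, hr, hrp⟩ := hG.exists_mem_ne ⟨ℓ, hℓ⟩ p
  have hqr : q ≠ r := fun h => hq (h ▸ hr)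
  obtain ⟨m, ⟨hqm, hrm⟩, -⟩ := hG.existsUnique_line hqr
  refine ⟨m, fun hpm => ?_⟩
  rcases hG.eq_or_eq hpm hrm hpℓ hr with h | rfl
  exacts [hrp h.symm, hq hqm]

@[reducible]
noncomputable def hasLines (hG : IsGeometry lines) (hlines : 2 ≤ lines.card) :
    Configuration.HasLines P lines where
  exists_point := hG.exists_notMem hlines
  exists_line := hG.exists_line_notMem hlines
  eq_or_eq := hG.eq_or_eq
  mkLine h := (hG.existsUnique_line h).choose
  mkLine_ax h := (hG.existsUnique_line h).choose_spec.1

end IsGeometry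

theorem deBruijn_Erdos {P : Type*} [Fintype P] (lines : Finset (Finset P))
    (hgeom : IsGeometry lines) (hlines : 2 ≤ lines.card) :
    Fintype.card P ≤ lines.card := by
  let := hgeom.hasLines hlines
  simpa using Configuration.HasLines.card_le (P := P) (L := lines)
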